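/- arXiv:1606.09101 — 6 statements merged into one kernel-verified Lean document; each statement's English description precedes it below -/
import Mathlib

section
/- The star graph K_{1,m} (m ≥ 1) has modularity q*(K_{1,m}) = 0. -/
open Finset
open scoped Classical

variable {V : Type*} [Fintype V] [DecidableEq V]

/-- Number of edges of `G` inside vertex set `A` (as a real number). -/
noncomputable def eIn (G : SimpleGraph V) (A : Finset V) : ℝ :=
  (1/2) * ∑ u ∈ A, ∑ v ∈ A, if G.Adj u v then (1:ℝ) else 0

/-- Total number of edges of `G` (as a real number). -/
noncomputable def numEdges (G : SimpleGraph V) : ℝ := eIn G (univ : Finset V)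

/-- Degree of vertex `v` in `G` (as a real number). -/
noncomputable def degR (G : SimpleGraph V) (v : V) : ℝ :=
  ∑ u : V, if G.Adj v u then (1:ℝ) else 0

/-- Volume of vertex set `A`: sum of degrees of its vertices. -/
noncomputable def vol (G : SimpleGraph V) (A : Finset V) : ℝ := ∑ v ∈ A, degR G v

/-- Number of edges of `G` between `A` and its complement (as a real number). -/
noncomputable def eCross (G : SimpleGraph V) (A : Finset V) : ℝ :=
  ∑ u ∈ A, ∑ v ∈ (univ : Finset V) \ A, if G.Adj u v then (1:ℝ) else 0

/-- The modularity score of a vertex partition `P` of `G`. -/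
noncomputable def modScore (G : SimpleGraph V) (P : Finpartition (univ : Finset V)) : ℝ :=
  (∑ A ∈ P.parts, eIn G A) / numEdges G
    - (∑ A ∈ P.parts, (vol G A)^2) / (4 * (numEdges G)^2)

/-- The modularity of `G`: the supremum of modularity scores over all vertex partitions. -/
noncomputable def modularity (G : SimpleGraph V) : ℝ :=
  sSup { q : ℝ | ∃ P : Finpartition (univ : Finset V), q = modScore G P }

/-- The star `K_{1,m}` on `m+1` vertices, with center `0` joined to `m` leaves. -/
def starGraph (m : ℕ) : SimpleGraph (Fin (m+1)) where
  Adj u v := (u = 0 ∧ v ≠ 0) ∨ (v = 0 ∧ u ≠ 0)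
  symm := ⟨by intro u v h; tauto⟩
  loopless := ⟨by intro u h; tauto⟩

/-! In a partition of the star, only the part `A` containing the centre contains edges: if `A`
holds `k` leaves then `e(A) = k` and `vol(A) = m + k`, so the score is at most
`k / m - (m + k)² / (4 m²) = -(m - k)² / (4 m²) ≤ 0`.  The one-part partition scores `0`. -/

omit [DecidableEq V] in
theorem vol_univ (G : SimpleGraph V) : vol G univ = 2 * numEdges G := by
  simp only [vol, degR, numEdges, eIn]
  ring

theorem modScore_indiscrete (G : SimpleGraph V) (h : (univ : Finset V) ≠ ⊥) :
    modScore G (Finpartition.indiscrete h) = 0 := by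
  rw [modScore, Finpartition.indiscrete_parts, sum_singleton, sum_singleton, vol_univ]
  change numEdges G / numEdges G - _ = 0
  rcases eq_or_ne (numEdges G) 0 with h0 | h0
  · simp [h0]
  · field_simp
    ring

theorem modularity_eq_zero_of_modScore_nonpos [Nonempty V] (G : SimpleGraph V)
    (h : ∀ P, modScore G P ≤ 0) : modularity G = 0 := by
  refine IsGreatest.csSup_eq ⟨⟨Finpartition.indiscrete univ_nonempty.ne_empty, ?_⟩, ?_⟩
  · exact (modScore_indiscrete G _).symm
  · rintro q ⟨P, rfl⟩
    exact h P

/-- AM-GM `4 M x ≤ (M + x)²` divided by `4 M²`; at `M = 0` both sides are junk `0`. -/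
theorem div_le_add_sq_div_four_mul_sq (x M : ℝ) : x / M ≤ (M + x) ^ 2 / (4 * M ^ 2) := by
  rcases eq_or_ne M 0 with rfl | hM
  · simp
  · calc x / M = 4 * M * x / (4 * M ^ 2) := by field_simp
      _ ≤ (M + x) ^ 2 / (4 * M ^ 2) := by gcongr; nlinarith [sq_nonneg (M - x)]

namespace starGraph

variable {m : ℕ}

theorem sum_adj (u : Fin (m + 1)) (A : Finset (Fin (m + 1))) :
    ∑ v ∈ A, (if (starGraph m).Adj u v then (1 : ℝ) else 0) =
      if u = 0 then (#(A.erase 0) : ℝ) else if (0 : Fin (m + 1)) ∈ A then 1 else 0 := by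
  split_ifs with hu h0
  · have hadj : ∀ v, (starGraph m).Adj u v ↔ v ≠ 0 := by simp [starGraph, hu]
    simp only [hadj, sum_boole, filter_ne']
  all_goals simp [starGraph, *]

theorem degR_eq (v : Fin (m + 1)) : degR (starGraph m) v = if v = 0 then (m : ℝ) else 1 := by
  rw [degR, sum_adj]
  simp

theorem eIn_of_zero_mem {A : Finset (Fin (m + 1))} (h0 : 0 ∈ A) :
    eIn (starGraph m) A = #(A.erase 0) := by
  rw [eIn, sum_congr rfl fun u _ => sum_adj u A, ← add_sum_erase A _ h0, if_pos rfl,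
    sum_congr rfl fun u hu => by rw [if_neg (ne_of_mem_erase hu), if_pos h0]]
  simp only [sum_const, nsmul_eq_mul, mul_one]
  ring

theorem eIn_of_zero_notMem {A : Finset (Fin (m + 1))} (h0 : 0 ∉ A) :
    eIn (starGraph m) A = 0 := by
  rw [eIn, sum_congr rfl fun u hu => by
    rw [sum_adj, if_neg (ne_of_mem_of_not_mem hu h0), if_neg h0]]
  simp

theorem numEdges_eq : numEdges (starGraph m) = m := by
  rw [numEdges, eIn_of_zero_mem (mem_univ 0)]
  simp

theorem vol_of_zero_mem {A : Finset (Fin (m + 1))} (h0 : 0 ∈ A) :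
    vol (starGraph m) A = m + #(A.erase 0) := by
  rw [vol, ← add_sum_erase A _ h0, degR_eq, if_pos rfl,
    sum_congr rfl fun u hu => by rw [degR_eq, if_neg (ne_of_mem_erase hu)]]
  simp

theorem sum_eIn_parts (P : Finpartition (univ : Finset (Fin (m + 1)))) :
    ∑ A ∈ P.parts, eIn (starGraph m) A = #((P.part 0).erase 0) := by
  rw [sum_eq_single_of_mem _ (P.part_mem.mpr (mem_univ 0)) fun B hB hne =>
    eIn_of_zero_notMem fun h0 => hne (P.part_eq_of_mem hB h0).symm]
  exact eIn_of_zero_mem (P.mem_part (mem_univ 0))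

theorem modScore_nonpos (P : Finpartition (univ : Finset (Fin (m + 1)))) :
    modScore (starGraph m) P ≤ 0 := by
  set A := P.part 0
  have hA : A ∈ P.parts := P.part_mem.mpr (mem_univ 0)
  set k := ((#(A.erase 0) : ℕ) : ℝ)
  calc modScore (starGraph m) P
      = k / m - (∑ B ∈ P.parts, vol (starGraph m) B ^ 2) / (4 * m ^ 2) := by
        rw [modScore, sum_eIn_parts, numEdges_eq]
    _ ≤ k / m - vol (starGraph m) A ^ 2 / (4 * m ^ 2) := by
        gcongr
        exact single_le_sum (fun B _ => sq_nonneg (vol (starGraph m) B)) hA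
    _ = k / m - (m + k) ^ 2 / (4 * m ^ 2) := by
        rw [vol_of_zero_mem (P.mem_part (mem_univ 0))]
    _ ≤ 0 := sub_nonpos.mpr (div_le_add_sq_div_four_mul_sq k m)

end starGraph

theorem modularity_star_general (m : ℕ) :
    modularity (starGraph m) = 0 :=
  modularity_eq_zero_of_modScore_nonpos _ starGraph.modScore_nonpos

/-- the star `K_{1,m}` (`m ≥ 1`) has modularity 0. -/
theorem modularity_star (m : ℕ) (hm : 1 ≤ m) :
    modularity (starGraph m) = 0 :=
  modularity_star_general m
end

section
/- Let G = (V,E) and G' = (V,E') be two graphs on the same vertex set V, each with m ≥ 1 edges, and suppose every vertex has the same degree in G as in G'. Then |q*(G) − q*(G')| ≤ |E △ E'|/(2m), where E △ E' is the symmetric difference of the edge sets. -/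
open Finset
open scoped Classical

variable {V : Type*} [Fintype V] [DecidableEq V]

lemma sum_parts_sum (P : Finpartition (univ : Finset V)) (g : V → ℝ) :
    ∑ A ∈ P.parts, ∑ u ∈ A, g u = ∑ u : V, g u := by
  have h := Finset.sum_biUnion (f := g) P.supIndep.pairwiseDisjoint
  rw [← Finset.sup_eq_biUnion, P.sup_parts] at h
  simpa using h.symm

lemma score_le_one (G : SimpleGraph V) (hm : 1 ≤ numEdges G)
    (P : Finpartition (univ : Finset V)) : modScore G P ≤ 1 := by
  have hm0 : (0:ℝ) < numEdges G := zero_lt_one.trans_le hm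
  have h1 : ∑ A ∈ P.parts, eIn G A ≤ numEdges G := by
    have : ∑ A ∈ P.parts, eIn G A ≤
        ∑ A ∈ P.parts, (1/2) * ∑ u ∈ A, ∑ v : V, (if G.Adj u v then (1:ℝ) else 0) := by
      refine Finset.sum_le_sum fun A _ => ?_
      unfold eIn
      refine mul_le_mul_of_nonneg_left (Finset.sum_le_sum fun u _ => ?_) (by norm_num)
      exact Finset.sum_le_sum_of_subset_of_nonneg (Finset.subset_univ A)
        (by intro i _ _; positivity)
    calc ∑ A ∈ P.parts, eIn G A ≤ _ := this
      _ = (1/2) * ∑ A ∈ P.parts, ∑ u ∈ A, ∑ v : V, (if G.Adj u v then (1:ℝ) else 0) := by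
          rw [Finset.mul_sum]
      _ = numEdges G := by
          rw [sum_parts_sum P (fun u => ∑ v : V, (if G.Adj u v then (1:ℝ) else 0))]
          rfl
  have h2 : 0 ≤ (∑ A ∈ P.parts, (vol G A)^2) / (4 * (numEdges G)^2) := by positivity
  have : (∑ A ∈ P.parts, eIn G A) / numEdges G ≤ 1 := by
    rw [div_le_one hm0]; exact h1
  unfold modScore; linarith

lemma score_close (G G' : SimpleGraph V)
    (hm : 1 ≤ numEdges G) (hm' : numEdges G = numEdges G')
    (hdeg : ∀ v : V, degR G v = degR G' v) (P : Finpartition (univ : Finset V)) :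
    |modScore G P - modScore G' P| ≤
      ((1/2) * ∑ u : V, ∑ v : V, if G.Adj u v ↔ G'.Adj u v then (0:ℝ) else 1)
        / (2 * numEdges G) := by
  have hm0 : (0:ℝ) < numEdges G := zero_lt_one.trans_le hm
  set d : V → V → ℝ := fun u v =>
    (if G.Adj u v then (1:ℝ) else 0) - (if G'.Adj u v then (1:ℝ) else 0) with hd
  set ind : V → V → ℝ := fun u v => if G.Adj u v ↔ G'.Adj u v then (0:ℝ) else 1 with hind
  have habs : ∀ u v, |d u v| ≤ ind u v := by
    intro u v
    by_cases h1 : G.Adj u v <;> by_cases h2 : G'.Adj u v <;>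
      simp [hd, hind, h1, h2]
  have hrow : ∀ u, ∑ v : V, d u v = 0 := by
    intro u
    have := hdeg u
    unfold degR at this
    simp only [hd, Finset.sum_sub_distrib]
    linarith
  -- per part identity
  have hpart : ∀ A ∈ P.parts, eIn G A - eIn G' A =
      (1/4) * (∑ u ∈ A, ∑ v ∈ A, d u v) - (1/4) * (∑ u ∈ A, ∑ v ∈ (univ : Finset V) \ A, d u v) := by
    intro A _
    have hsplit : ∀ u, ∑ v ∈ A, d u v + ∑ v ∈ (univ : Finset V) \ A, d u v = 0 := by
      intro u
      rw [add_comm, Finset.sum_sdiff_eq_sub (Finset.subset_univ A)]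
      have := hrow u
      linarith
    have hin : eIn G A - eIn G' A = (1/2) * ∑ u ∈ A, ∑ v ∈ A, d u v := by
      unfold eIn
      simp only [hd, Finset.sum_sub_distrib]
      ring
    have hcross : ∑ u ∈ A, ∑ v ∈ A, d u v = - ∑ u ∈ A, ∑ v ∈ (univ : Finset V) \ A, d u v := by
      have : ∑ u ∈ A, (∑ v ∈ A, d u v + ∑ v ∈ (univ : Finset V) \ A, d u v) = 0 :=
        Finset.sum_eq_zero fun u _ => hsplit u
      rw [Finset.sum_add_distrib] at this
      linarith
    rw [hin]
    rw [hcross]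
    ring
  -- bound per part
  have hbound : ∀ A ∈ P.parts, |eIn G A - eIn G' A| ≤ (1/4) * ∑ u ∈ A, ∑ v : V, ind u v := by
    intro A hA
    rw [hpart A hA]
    have h1 : |∑ u ∈ A, ∑ v ∈ A, d u v| ≤ ∑ u ∈ A, ∑ v ∈ A, ind u v :=
      (Finset.abs_sum_le_sum_abs _ _).trans <| Finset.sum_le_sum fun u _ =>
        (Finset.abs_sum_le_sum_abs _ _).trans <| Finset.sum_le_sum fun v _ => habs u v
    have h2 : |∑ u ∈ A, ∑ v ∈ (univ : Finset V) \ A, d u v| ≤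
        ∑ u ∈ A, ∑ v ∈ (univ : Finset V) \ A, ind u v :=
      (Finset.abs_sum_le_sum_abs _ _).trans <| Finset.sum_le_sum fun u _ =>
        (Finset.abs_sum_le_sum_abs _ _).trans <| Finset.sum_le_sum fun v _ => habs u v
    have h3 : ∑ u ∈ A, ∑ v ∈ A, ind u v + ∑ u ∈ A, ∑ v ∈ (univ : Finset V) \ A, ind u v
        = ∑ u ∈ A, ∑ v : V, ind u v := by
      rw [← Finset.sum_add_distrib]
      refine Finset.sum_congr rfl fun u _ => ?_
      rw [add_comm, Finset.sum_sdiff_eq_sub (Finset.subset_univ A)]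
      ring
    have hX : |(1/4:ℝ) * (∑ u ∈ A, ∑ v ∈ A, d u v)| = (1/4) * |∑ u ∈ A, ∑ v ∈ A, d u v| := by
      rw [abs_mul]; norm_num
    have hY : |(1/4:ℝ) * (∑ u ∈ A, ∑ v ∈ (univ : Finset V) \ A, d u v)|
        = (1/4) * |∑ u ∈ A, ∑ v ∈ (univ : Finset V) \ A, d u v| := by
      rw [abs_mul]; norm_num
    calc |(1/4) * (∑ u ∈ A, ∑ v ∈ A, d u v) - (1/4) * (∑ u ∈ A, ∑ v ∈ (univ : Finset V) \ A, d u v)|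
        ≤ |(1/4) * (∑ u ∈ A, ∑ v ∈ A, d u v)| + |(1/4) * (∑ u ∈ A, ∑ v ∈ (univ : Finset V) \ A, d u v)| :=
          abs_sub _ _
      _ ≤ (1/4) * (∑ u ∈ A, ∑ v ∈ A, ind u v) + (1/4) * (∑ u ∈ A, ∑ v ∈ (univ : Finset V) \ A, ind u v) := by
          rw [hX, hY]; linarith
      _ = (1/4) * ∑ u ∈ A, ∑ v : V, ind u v := by rw [← h3]; ring
  -- total
  have hvol : ∀ A, vol G A = vol G' A := fun A => Finset.sum_congr rfl fun v _ => hdeg v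
  have hscore : modScore G P - modScore G' P = (∑ A ∈ P.parts, (eIn G A - eIn G' A)) / numEdges G := by
    unfold modScore
    rw [← hm']
    simp only [hvol]
    rw [Finset.sum_sub_distrib, sub_div]
    ring
  rw [hscore, abs_div, abs_of_pos hm0]
  have hnum : |∑ A ∈ P.parts, (eIn G A - eIn G' A)| ≤ (1/4) * ∑ u : V, ∑ v : V, ind u v := by
    calc |∑ A ∈ P.parts, (eIn G A - eIn G' A)| ≤ ∑ A ∈ P.parts, |eIn G A - eIn G' A| :=
          Finset.abs_sum_le_sum_abs _ _
      _ ≤ ∑ A ∈ P.parts, (1/4) * ∑ u ∈ A, ∑ v : V, ind u v := Finset.sum_le_sum hbound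
      _ = (1/4) * ∑ A ∈ P.parts, ∑ u ∈ A, ∑ v : V, ind u v := by rw [Finset.mul_sum]
      _ = (1/4) * ∑ u : V, ∑ v : V, ind u v := by
          rw [sum_parts_sum P (fun u => ∑ v : V, ind u v)]
  rw [div_le_div_iff₀ hm0 (by linarith)]
  calc |∑ A ∈ P.parts, (eIn G A - eIn G' A)| * (2 * numEdges G)
      ≤ ((1/4) * ∑ u : V, ∑ v : V, ind u v) * (2 * numEdges G) := by
        have : (0:ℝ) ≤ 2 * numEdges G := by linarith
        exact mul_le_mul_of_nonneg_right hnum this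
    _ = ((1/2) * ∑ u : V, ∑ v : V, ind u v) * numEdges G := by ring

/-- two graphs on the same vertex set with the same degrees have
modularities differing by at most `|E △ E'|/(2m)`. -/
theorem abs_modularity_sub_le (G G' : SimpleGraph V)
    (hm : 1 ≤ numEdges G) (hm' : numEdges G = numEdges G')
    (hdeg : ∀ v : V, degR G v = degR G' v) :
    |modularity G - modularity G'| ≤
      ((1/2) * ∑ u : V, ∑ v : V, if G.Adj u v ↔ G'.Adj u v then (0:ℝ) else 1)
        / (2 * numEdges G) := by
  set c : ℝ := ((1/2) * ∑ u : V, ∑ v : V, if G.Adj u v ↔ G'.Adj u v then (0:ℝ) else 1)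
        / (2 * numEdges G) with hc
  have hm2 : 1 ≤ numEdges G' := hm' ▸ hm
  set S : Set ℝ := { q : ℝ | ∃ P : Finpartition (univ : Finset V), q = modScore G P } with hS
  set S' : Set ℝ := { q : ℝ | ∃ P : Finpartition (univ : Finset V), q = modScore G' P } with hS'
  have hne : S.Nonempty := ⟨modScore G ⊥, ⊥, rfl⟩
  have hne' : S'.Nonempty := ⟨modScore G' ⊥, ⊥, rfl⟩
  have hbdd : BddAbove S := ⟨1, fun x ⟨P, hP⟩ => hP ▸ score_le_one G hm P⟩
  have hbdd' : BddAbove S' := ⟨1, fun x ⟨P, hP⟩ => hP ▸ score_le_one G' hm2 P⟩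
  have key : ∀ P : Finpartition (univ : Finset V),
      |modScore G P - modScore G' P| ≤ c := score_close G G' hm hm' hdeg
  have h1 : modularity G ≤ modularity G' + c := by
    apply csSup_le hne
    rintro x ⟨P, rfl⟩
    have h := (abs_le.mp (key P)).2
    have hle : modScore G' P ≤ modularity G' := le_csSup hbdd' ⟨P, rfl⟩
    have := (abs_le.mp (key P)).2
    linarith
  have h2 : modularity G' ≤ modularity G + c := by
    apply csSup_le hne'
    rintro x ⟨P, rfl⟩
    have hle : modScore G P ≤ modularity G := le_csSup hbdd ⟨P, rfl⟩
    have := (abs_le.mp (key P)).1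
    linarith
  rw [abs_sub_le_iff]
  constructor <;> linarith
end

section
/- If G is a connected graph with m ≥ 1 edges, then q*(G) ≤ 1 − 2/√m + 1/m. -/
open Finset
open scoped Classical

variable {V : Type*} [Fintype V] [DecidableEq V]

/-!
Contracting each part of a partition `P` of a connected graph to a vertex gives a connected graph
on `k = #P.parts` vertices, which has at least `k - 1` edges; each of them comes from an edge of `G`
between two parts, so at most `m - (k - 1)` edges lie inside parts. The parts' volumes sum to `2m`,
so by Cauchy–Schwarz the squared volumes sum to at least `4m² / k`. Hence
`q_P ≤ 1 - (k - 1) / m - 1 / k`, and `k / m + 1 / k ≥ 2 / √m` by AM–GM.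
-/

namespace SimpleGraph

variable {α β : Type*} {G : SimpleGraph α}

theorem Preconnected.map_of_surjective {f : α → β} (hf : Function.Surjective f)
    (hG : G.Preconnected) : (G.map f).Preconnected := by
  refine hf.forall₂.2 fun u v => ?_
  rw [reachable_iff_reflTransGen]
  refine ((reachable_iff_reflTransGen u v).1 (hG u v)).lift' f fun a b hab => ?_
  by_cases h : f a = f b
  · rw [Function.onFun, h]
  · exact .single ⟨h, a, b, hab, rfl, rfl⟩

theorem Connected.map_of_surjective {f : α → β} (hf : Function.Surjective f)
    (hG : G.Connected) : (G.map f).Connected :=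
  have := hG.nonempty.map f
  ⟨hG.preconnected.map_of_surjective hf⟩

theorem two_mul_card_edgeSet_map_le [Fintype α] [Fintype β] (f : α → β) :
    2 * Nat.card (G.map f).edgeSet ≤
      Nat.card {p : α × α // G.Adj p.1 p.2 ∧ f p.1 ≠ f p.2} := by
  rw [Nat.card_eq_fintype_card, card_edgeSet, ← dart_card_eq_twice_card_edges,
    ← Nat.card_eq_fintype_card]
  refine Nat.card_le_card_of_surjective
    (fun p => ⟨(f p.1.1, f p.1.2), p.2.2, p.1.1, p.1.2, p.2.1, rfl, rfl⟩) ?_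
  rintro ⟨⟨a, b⟩, hne, u, v, huv, hu, hv⟩
  exact ⟨⟨(u, v), huv, by simpa [hu, hv] using hne⟩, by ext <;> simp [hu, hv]⟩

end SimpleGraph

theorem Finpartition.sum_sum_parts {α M : Type*} [DecidableEq α] [AddCommMonoid M] {s : Finset α}
    (P : Finpartition s) (g : Finset α → α → M) :
    ∑ A ∈ P.parts, ∑ x ∈ A, g A x = ∑ x ∈ s, g (P.part x) x := by
  calc ∑ A ∈ P.parts, ∑ x ∈ A, g A x = ∑ A ∈ P.parts, ∑ x ∈ id A, g (P.part x) x :=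
        sum_congr rfl fun A hA => sum_congr rfl fun x hx => by rw [P.part_eq_of_mem hA hx]
    _ = ∑ x ∈ s, g (P.part x) x := by rw [← sum_biUnion P.disjoint, P.biUnion_parts]

theorem Finpartition.card_parts_univ_pos {α : Type*} [Fintype α] [DecidableEq α] [Nonempty α]
    (P : Finpartition (univ : Finset α)) : 0 < #P.parts :=
  card_pos.2 (P.parts_nonempty univ_nonempty.ne_empty)

theorem two_div_sqrt_le_div_add_inv {m k : ℝ} (hm : 0 < m) (hk : 0 < k) :
    2 / √m ≤ k / m + 1 / k := by
  rw [div_add_div _ _ hm.ne' hk.ne', div_le_div_iff₀ (Real.sqrt_pos.2 hm) (by positivity)]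
  nlinarith [mul_nonneg (Real.sqrt_nonneg m) (sq_nonneg (k - √m)), Real.sq_sqrt hm.le]

section

variable (G : SimpleGraph V)

theorem two_mul_eIn_add_eCross (A : Finset V) : 2 * eIn G A + eCross G A = vol G A := by
  simp only [eIn, eCross, vol, degR]
  rw [← mul_assoc, mul_one_div_cancel two_ne_zero, one_mul, ← sum_add_distrib]
  exact sum_congr rfl fun u _ => by rw [add_comm, sum_sdiff (subset_univ A)]

theorem sum_vol_eq (P : Finpartition (univ : Finset V)) :
    ∑ A ∈ P.parts, vol G A = 2 * numEdges G := by
  rw [numEdges, eIn, ← mul_assoc, mul_one_div_cancel two_ne_zero, one_mul]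
  exact P.sum_sum_parts fun _ v => degR G v

theorem sum_eCross_eq_card (P : Finpartition (univ : Finset V)) :
    ∑ A ∈ P.parts, eCross G A =
      Nat.card {p : V × V // G.Adj p.1 p.2 ∧ P.part p.1 ≠ P.part p.2} := by
  simp only [eCross]
  rw [P.sum_sum_parts, Nat.card_eq_fintype_card, Fintype.card_subtype, card_filter]
  push_cast
  rw [Fintype.sum_prod_type]
  refine sum_congr rfl fun u _ => ?_
  rw [sdiff_eq_filter, sum_filter]
  refine sum_congr rfl fun v _ => ?_
  by_cases h : P.part u = P.part v <;>
    simp [P.mem_part_iff_part_eq_part (mem_univ v) (mem_univ u), h, eq_comm]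

theorem two_mul_card_parts_sub_one_le_sum_eCross (hG : G.Connected)
    (P : Finpartition (univ : Finset V)) :
    2 * ((#P.parts : ℝ) - 1) ≤ ∑ A ∈ P.parts, eCross G A := by
  -- `G.map toPart` is `G` with each part contracted to a single vertex.
  let toPart (v : V) : P.parts := ⟨P.part v, P.part_mem.2 (mem_univ v)⟩
  have hsurj : Function.Surjective toPart := fun A => by
    obtain ⟨v, -, hv⟩ := P.part_surjOn A.2
    exact ⟨v, Subtype.ext hv⟩
  have hcard := (hG.map_of_surjective hsurj).card_vert_le_card_edgeSet_add_one
  rw [Nat.card_eq_fintype_card, Fintype.card_coe] at hcard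
  have hcross : Nat.card {p : V × V // G.Adj p.1 p.2 ∧ toPart p.1 ≠ toPart p.2}
      = Nat.card {p : V × V // G.Adj p.1 p.2 ∧ P.part p.1 ≠ P.part p.2} := by
    simp only [toPart, ne_eq, Subtype.mk.injEq]
  have hE := (G.two_mul_card_edgeSet_map_le toPart).trans_eq hcross
  rw [sum_eCross_eq_card, mul_sub, mul_one, sub_le_iff_le_add]
  norm_cast at hE ⊢
  omega

theorem sum_eIn_le (hG : G.Connected) (P : Finpartition (univ : Finset V)) :
    ∑ A ∈ P.parts, eIn G A ≤ numEdges G - (#P.parts - 1) := by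
  have h := sum_vol_eq G P
  rw [← sum_congr rfl fun A _ => two_mul_eIn_add_eCross G A, sum_add_distrib, ← mul_sum] at h
  linarith [two_mul_card_parts_sub_one_le_sum_eCross G hG P]

theorem inv_card_parts_le (P : Finpartition (univ : Finset V)) (hm : 0 < numEdges G)
    (hk : 0 < #P.parts) :
    1 / (#P.parts : ℝ) ≤ (∑ A ∈ P.parts, vol G A ^ 2) / (4 * numEdges G ^ 2) := by
  have hCS := sq_sum_le_card_mul_sum_sq (s := P.parts) (f := vol G)
  rw [sum_vol_eq] at hCS
  rw [div_le_div_iff₀ (by exact_mod_cast hk) (by positivity)]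
  linarith

theorem modScore_le (hG : G.Connected) (P : Finpartition (univ : Finset V))
    (hm : 0 < numEdges G) :
    modScore G P ≤ 1 - (#P.parts - 1) / numEdges G - 1 / #P.parts := by
  have : Nonempty V := hG.nonempty
  have hE : (∑ A ∈ P.parts, eIn G A) / numEdges G ≤ 1 - (#P.parts - 1) / numEdges G := by
    rw [one_sub_div hm.ne']
    exact div_le_div_of_nonneg_right (sum_eIn_le G hG P) hm.le
  rw [modScore]
  linarith [inv_card_parts_le G P hm P.card_parts_univ_pos]

end

/-- a connected graph with `m ≥ 1` edges has modularity at most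
`1 - 2/√m + 1/m`. -/
theorem modularity_le_of_connected (G : SimpleGraph V) (hG : G.Connected)
    (hm : 1 ≤ numEdges G) :
    modularity G ≤ 1 - 2 / Real.sqrt (numEdges G) + 1 / numEdges G := by
  have hm0 : 0 < numEdges G := one_pos.trans_le hm
  refine csSup_le ⟨_, ⊥, rfl⟩ ?_
  rintro _ ⟨P, rfl⟩
  have : Nonempty V := hG.nonempty
  have hk : (0 : ℝ) < #P.parts := mod_cast P.card_parts_univ_pos
  linarith [modScore_le G hG P hm0, two_div_sqrt_le_div_add_inv hm0 hk,
    sub_div (#P.parts : ℝ) 1 (numEdges G)]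
end

section
/- Let r ≥ 1 and let G be an r-regular graph on n ≥ r+1 vertices. For any nonempty A ⊆ V(G), we have e(A,Ā)/(r|A|) + |A|/n ≥ (r+1)/n, with equality if and only if the induced subgraph G[A] is a complete graph K_{r+1} forming a connected component of G. -/
open Finset
open scoped Classical

variable {V : Type*} [Fintype V] [DecidableEq V]

/-- in an `r`-regular graph on `n ≥ r+1` vertices, every nonempty `A` has
`e(A,Ā)/(r|A|) + |A|/n ≥ (r+1)/n`, with equality iff `G[A]` is a complete graph `K_{r+1}`
forming a connected component of `G`. -/
theorem eCross_vol_lower_bound (G : SimpleGraph V) (r : ℕ) (hr : 1 ≤ r)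
    (hreg : G.IsRegularOfDegree r) (hn : r + 1 ≤ Fintype.card V)
    (A : Finset V) (hA : A.Nonempty) :
    ((r : ℝ) + 1) / (Fintype.card V) ≤
        eCross G A / (r * A.card) + (A.card : ℝ) / (Fintype.card V)
    ∧ (eCross G A / (r * A.card) + (A.card : ℝ) / (Fintype.card V)
          = ((r : ℝ) + 1) / (Fintype.card V)
        ↔ A.card = r + 1 ∧ (∀ u ∈ A, ∀ v ∈ A, u ≠ v → G.Adj u v)
            ∧ ∀ u ∈ A, ∀ v : V, v ∉ A → ¬ G.Adj u v) := by
  classical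
  have hn0' : 0 < Fintype.card V := by omega
  set n : ℕ := Fintype.card V with hn_def
  set a : ℕ := A.card with ha_def
  have ha1 : 1 ≤ a := Finset.card_pos.mpr hA
  have ha0 : 0 < (a:ℝ) := by exact_mod_cast ha1
  have hn0 : 0 < (n:ℝ) := by exact_mod_cast hn0'
  have hr0 : 0 < (r:ℝ) := by exact_mod_cast hr
  have hra : 0 < (r:ℝ) * a := mul_pos hr0 ha0
  have hnr : (r:ℝ) + 1 ≤ n := by exact_mod_cast hn
  set S : ℝ := ∑ u ∈ A, ∑ v ∈ A, if G.Adj u v then (1:ℝ) else 0 with hS_def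
  have hdeg : ∀ u : V, (∑ v : V, if G.Adj u v then (1:ℝ) else 0) = r := by
    intro u
    have h1 : (univ.filter (G.Adj u)).card = r := by
      rw [← SimpleGraph.neighborFinset_eq_filter]; exact hreg u
    rw [Finset.sum_boole, h1]
  have hsplit : ∀ u : V, (∑ v ∈ (univ : Finset V) \ A, if G.Adj u v then (1:ℝ) else 0)
      = (r:ℝ) - ∑ v ∈ A, if G.Adj u v then (1:ℝ) else 0 := by
    intro u
    have h2 := Finset.sum_sdiff (f := fun v => if G.Adj u v then (1:ℝ) else 0)
      (Finset.subset_univ A)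
    have h3 := hdeg u
    linarith
  have hC : eCross G A = (r:ℝ) * a - S := by
    simp only [eCross]
    rw [Finset.sum_congr rfl (fun u _ => hsplit u), Finset.sum_sub_distrib,
      Finset.sum_const, nsmul_eq_mul, ← hS_def, ← ha_def]
    ring
  have hinner_eq : ∀ u ∈ A, (∑ v ∈ A, if G.Adj u v then (1:ℝ) else 0)
      = ∑ v ∈ A.erase u, if G.Adj u v then (1:ℝ) else 0 := by
    intro u hu
    rw [← Finset.sum_erase_add A _ hu]
    simp
  have herase_card : ∀ u ∈ A, (∑ v ∈ A.erase u, (1:ℝ)) = (a:ℝ) - 1 := by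
    intro u hu
    rw [Finset.sum_const, nsmul_eq_mul, mul_one, Finset.card_erase_of_mem hu, ← ha_def,
      Nat.cast_sub ha1, Nat.cast_one]
  have hinner_le : ∀ u ∈ A, (∑ v ∈ A, if G.Adj u v then (1:ℝ) else 0) ≤ (a:ℝ) - 1 := by
    intro u hu
    rw [hinner_eq u hu, ← herase_card u hu]
    exact Finset.sum_le_sum (fun v _ => by split <;> norm_num)
  have hS2 : S ≤ (a:ℝ) * ((a:ℝ) - 1) := by
    calc S ≤ ∑ _u ∈ A, ((a:ℝ) - 1) := Finset.sum_le_sum hinner_le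
      _ = (a:ℝ) * ((a:ℝ) - 1) := by rw [Finset.sum_const, nsmul_eq_mul, ← ha_def]
  have hE0 : 0 ≤ eCross G A := by
    simp only [eCross]
    exact Finset.sum_nonneg fun u _ => Finset.sum_nonneg fun v _ => by split <;> norm_num
  have hstrict : a ≤ r → ((r:ℝ)+1-a) * ((r:ℝ)*a) < eCross G A * n := by
    intro h
    have haR : (a:ℝ) ≤ r := by exact_mod_cast h
    have hT : (0:ℝ) < (r:ℝ)+1-a := by linarith
    have h1 : (0:ℝ) ≤ ((a:ℝ)*((a:ℝ)-1) - S) * n :=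
      mul_nonneg (by linarith) hn0.le
    have h2 : (0:ℝ) ≤ (a:ℝ)*((r:ℝ)+1-a) * (n - ((r:ℝ)+1)) :=
      mul_nonneg (mul_nonneg ha0.le hT.le) (by linarith)
    have h3 : (0:ℝ) < (a:ℝ)*((r:ℝ)+1-a) := mul_pos ha0 hT
    rw [hC]
    nlinarith [h1, h2, h3]
  have key : ((r:ℝ)+1-a) * ((r:ℝ)*a) ≤ eCross G A * n := by
    rcases le_or_gt a r with h | h
    · exact (hstrict h).le
    · have haR : (r:ℝ)+1 ≤ a := by exact_mod_cast h
      have h1 : ((r:ℝ)+1-a) * ((r:ℝ)*a) ≤ 0 :=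
        mul_nonpos_of_nonpos_of_nonneg (by linarith) hra.le
      nlinarith [mul_nonneg hE0 hn0.le]
  have heqd : ((r:ℝ)+1)/n = ((r:ℝ)+1-a)/n + (a:ℝ)/n := by ring
  constructor
  · have h1 : ((r:ℝ)+1-a)/n ≤ eCross G A/((r:ℝ)*a) := (div_le_div_iff₀ hn0 hra).mpr key
    linarith [heqd, h1]
  constructor
  · intro h
    have h' : eCross G A/((r:ℝ)*a) = ((r:ℝ)+1-a)/n := by
      rw [heqd] at h; linarith
    have heq2 : eCross G A * n = ((r:ℝ)+1-a) * ((r:ℝ)*a) := (div_eq_div_iff hra.ne' hn0.ne').mp h'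
    have hge' : r + 1 ≤ a := by
      by_contra hcon
      have h2 := hstrict (by omega)
      linarith
    have haR : (r:ℝ)+1 ≤ a := by exact_mod_cast hge'
    have hle0 : ((r:ℝ)+1-a) * ((r:ℝ)*a) ≤ 0 :=
      mul_nonpos_of_nonpos_of_nonneg (by linarith) hra.le
    have hE0n : 0 ≤ eCross G A * n := mul_nonneg hE0 hn0.le
    have hEz : eCross G A = 0 := by
      have hz : eCross G A * n = 0 := le_antisymm (by linarith) hE0n
      exact (mul_eq_zero.mp hz).resolve_right hn0.ne'
    have haRa : (a:ℝ) = (r:ℝ)+1 := by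
      have hz : ((r:ℝ)+1-a) * ((r:ℝ)*a) = 0 := by rw [← heq2, hEz]; ring
      have := (mul_eq_zero.mp hz).resolve_right hra.ne'
      linarith
    have hcard : a = r + 1 := by exact_mod_cast haRa
    refine ⟨hcard, ?_, ?_⟩
    · by_contra hcon
      push_neg at hcon
      obtain ⟨u, hu, v, hv, huv, hnadj⟩ := hcon
      have hSval : S = (a:ℝ) * ((a:ℝ)-1) := by
        have h5 : S = (r:ℝ)*a := by rw [hC] at hEz; linarith
        rw [h5, haRa]; ring
      have hlt2 : (∑ w ∈ A, if G.Adj u w then (1:ℝ) else 0) < (a:ℝ) - 1 := by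
        rw [hinner_eq u hu, ← herase_card u hu]
        refine Finset.sum_lt_sum (fun i _ => by split <;> norm_num)
          ⟨v, Finset.mem_erase.mpr ⟨fun hvu => huv hvu.symm, hv⟩, ?_⟩
        rw [if_neg hnadj]; norm_num
      have hSlt : S < (a:ℝ)*((a:ℝ)-1) := by
        calc S < ∑ _u ∈ A, ((a:ℝ)-1) := Finset.sum_lt_sum hinner_le ⟨u, hu, hlt2⟩
          _ = (a:ℝ)*((a:ℝ)-1) := by rw [Finset.sum_const, nsmul_eq_mul, ← ha_def]
      linarith
    · intro u hu v hv hadj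
      have h0 : (∑ u ∈ A, ∑ w ∈ (univ:Finset V)\A, if G.Adj u w then (1:ℝ) else 0) = 0 := by
        simpa [eCross] using hEz
      have h1 := (Finset.sum_eq_zero_iff_of_nonneg (fun x _ =>
        Finset.sum_nonneg (fun y _ => by split <;> norm_num))).mp h0 u hu
      have h2 := (Finset.sum_eq_zero_iff_of_nonneg (fun y _ => by
        split <;> norm_num)).mp h1 v (Finset.mem_sdiff.mpr ⟨Finset.mem_univ v, hv⟩)
      rw [if_pos hadj] at h2
      norm_num at h2
  · rintro ⟨hcard, _hcomp, hcross⟩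
    have hEz : eCross G A = 0 := by
      simp only [eCross]
      exact Finset.sum_eq_zero fun u hu => Finset.sum_eq_zero fun v hv =>
        if_neg (hcross u hu v (Finset.mem_sdiff.mp hv).2)
    have haRa : (a:ℝ) = (r:ℝ)+1 := by exact_mod_cast hcard
    rw [hEz, zero_div, zero_add, haRa]
end

section
/- Let r ≥ 1 and let G be an r-regular graph on n vertices with n ≥ r+1. Then q*(G) ≤ 1 − (r+1)/n. Moreover, equality holds for some G if and only if (r+1) divides n, and in that case the unique extremal graph is the disjoint union of n/(r+1) copies of K_{r+1} with the connected-components partition. -/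
open Finset
open scoped Classical

variable {V : Type*} [Fintype V] [DecidableEq V]

/-! For an `r`-regular graph `m = rn/2`, `vol A = r|A|` and `2 e(A) = r|A| - e(A, Aᶜ)`, so the
modularity score of a partition is `1 - (r + 1)/n - ∑_A δ(A) / (r n²)` with
`δ(A) = n e(A, Aᶜ) - r|A|(r + 1 - |A|)`. Every vertex of `A` has at least `r + 1 - |A|` neighbours
outside `A`, and `n ≥ r + 1`, so `δ(A) ≥ 0`, with equality for nonempty `A` only if `|A| = r + 1`
and no edge leaves `A`, i.e. `A` spans a `K_{r+1}` component. So the bound holds, a maximising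
partition of an extremal graph consists of `K_{r+1}` components (whence `r + 1 ∣ n`), and conversely
any partition into blocks of size `r + 1`, each made a clique, attains the bound. -/

namespace Finpartition

variable {α : Type*} [DecidableEq α] {s : Finset α} {m : ℕ}

theorem exists_forall_card_eq_iff_dvd :
    (∃ P : Finpartition s, ∀ t ∈ P.parts, #t = m) ↔ m ∣ #s := by
  constructor
  · rintro ⟨P, hP⟩
    rw [← P.sum_card_parts, sum_congr rfl hP, sum_const, smul_eq_mul]
    exact dvd_mul_left m _
  · rintro ⟨k, hk⟩
    have hsize : k * m + 0 * (m + 1) = #s := by rw [hk]; ring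
    -- `equitabilise` produces parts of size `m` or `m + 1`, and exactly `0` of the latter.
    refine ⟨(⊥ : Finpartition s).equitabilise hsize, fun t ht => ?_⟩
    refine (card_eq_of_mem_parts_equitabilise ht).resolve_right fun hbig => ?_
    have := (⊥ : Finpartition s).card_filter_equitabilise_big hsize
    exact (card_pos.2 ⟨t, mem_filter.2 ⟨ht, hbig⟩⟩).ne' this

end Finpartition

theorem degR_eq_degree {V : Type*} [Fintype V] (G : SimpleGraph V) (v : V) :
    degR G v = G.degree v := by
  rw [degR, sum_boole, ← G.neighborFinset_eq_filter, G.card_neighborFinset_eq_degree]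

theorem SimpleGraph.IsRegularOfDegree.succ_le_card {V : Type*} [Fintype V] [Nonempty V]
    {G : SimpleGraph V} {r : ℕ} (hG : G.IsRegularOfDegree r) : r + 1 ≤ Fintype.card V :=
  hG (Classical.arbitrary V) ▸ G.degree_lt_card_verts _

theorem vol_of_isRegularOfDegree {V : Type*} [Fintype V] {G : SimpleGraph V} {r : ℕ}
    (hG : G.IsRegularOfDegree r) (A : Finset V) : vol G A = r * #A := by
  simp [vol, degR_eq_degree, hG.degree_eq, mul_comm]

section Graph

variable {G : SimpleGraph V} {r : ℕ} {A : Finset V} {u v : V}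

theorem vol_eq_two_mul_eIn_add_eCross (G : SimpleGraph V) (A : Finset V) :
    vol G A = 2 * eIn G A + eCross G A := by
  have hsplit : ∀ u, degR G u = (∑ v ∈ univ \ A, if G.Adj u v then (1 : ℝ) else 0)
      + ∑ v ∈ A, if G.Adj u v then (1 : ℝ) else 0 := fun u => by
    rw [degR, sum_sdiff (subset_univ A)]
  rw [vol, sum_congr rfl fun u _ => hsplit u, sum_add_distrib, eIn, eCross]
  ring

theorem eCross_nonneg (G : SimpleGraph V) (A : Finset V) : 0 ≤ eCross G A :=
  sum_nonneg fun _ _ => sum_nonneg fun _ _ => by positivity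

theorem eCross_eq_zero_iff : eCross G A = 0 ↔ ∀ u ∈ A, ∀ v, G.Adj u v → v ∈ A := by
  simp only [eCross, sum_boole]
  rw [sum_eq_zero_iff_of_nonneg fun _ _ => by positivity]
  refine forall₂_congr fun u _ => ?_
  simp [filter_eq_empty_iff, not_imp_not]

theorem mem_of_reachable_of_eCross_eq_zero (hc : eCross G A = 0) (hu : u ∈ A)
    (huv : G.Reachable u v) : v ∈ A := by
  obtain ⟨w⟩ := huv
  induction w with
  | nil => exact hu
  | cons hadj _ ih => exact ih (eCross_eq_zero_iff.1 hc _ hu _ hadj)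

theorem degR_add_one_sub_card_le (hu : u ∈ A) :
    degR G u + 1 - #A ≤ ∑ v ∈ univ \ A, if G.Adj u v then (1 : ℝ) else 0 := by
  have hinner : #{v ∈ A | G.Adj u v} ≤ #(A.erase u) :=
    card_le_card fun v hv => by
      obtain ⟨hvA, hadj⟩ := mem_filter.1 hv
      exact mem_erase.2 ⟨hadj.ne', hvA⟩
  have hA : (#(A.erase u) : ℝ) + 1 = #A := by exact_mod_cast card_erase_add_one hu
  have hinner' : (#{v ∈ A | G.Adj u v} : ℝ) ≤ #(A.erase u) := by exact_mod_cast hinner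
  rw [degR, ← sum_sdiff (subset_univ A), sum_boole (s := A)]
  linarith

theorem numEdges_of_isRegularOfDegree (hG : G.IsRegularOfDegree r) :
    numEdges G = r * Fintype.card V / 2 := by
  have h := vol_eq_two_mul_eIn_add_eCross G univ
  rw [vol_of_isRegularOfDegree hG, eCross, sdiff_self] at h
  simp only [card_univ, bot_eq_empty, sum_empty, sum_const_zero, add_zero] at h
  rw [numEdges]
  linarith

theorem card_mul_sub_le_eCross (hG : G.IsRegularOfDegree r) (A : Finset V) :
    #A * (r + 1 - #A) ≤ eCross G A := by
  calc (#A : ℝ) * (r + 1 - #A) = ∑ _u ∈ A, (r + 1 - #A : ℝ) := by rw [sum_const, nsmul_eq_mul]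
    _ ≤ eCross G A := sum_le_sum fun u hu => by
        simpa [degR_eq_degree, hG.degree_eq] using degR_add_one_sub_card_le (G := G) hu

theorem isClique_of_eCross_eq_zero (hG : G.IsRegularOfDegree r) (hcard : #A = r + 1)
    (hc : eCross G A = 0) : G.IsClique (A : Set V) := by
  intro u hu v hv huv
  have hsub : G.neighborFinset u ⊆ A.erase u := fun w hw => by
    rw [G.mem_neighborFinset] at hw
    exact mem_erase.2 ⟨hw.ne', eCross_eq_zero_iff.1 hc u hu w hw⟩
  have hle : #(A.erase u) ≤ #(G.neighborFinset u) := by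
    rw [card_erase_of_mem hu, hcard, G.card_neighborFinset_eq_degree, hG.degree_eq]
    rfl
  rw [← G.mem_neighborFinset, eq_of_subset_of_card_le hsub hle]
  exact mem_erase.2 ⟨huv.symm, hv⟩

-- `r n |A|` times the excess of `e(A, Aᶜ) / (r |A|) + |A| / n` over its minimum `(r + 1) / n`.
noncomputable def cliqueDefect (G : SimpleGraph V) (r : ℕ) (A : Finset V) : ℝ :=
  Fintype.card V * eCross G A - r * #A * (r + 1 - #A)

theorem cliqueDefect_nonneg (hG : G.IsRegularOfDegree r) (A : Finset V) :
    0 ≤ cliqueDefect G r A := by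
  rcases A.eq_empty_or_nonempty with rfl | ⟨u, -⟩
  · simp [cliqueDefect, eCross]
  have : Nonempty V := ⟨u⟩
  have hn : (r : ℝ) + 1 ≤ Fintype.card V := by exact_mod_cast hG.succ_le_card
  have hc := card_mul_sub_le_eCross hG A
  have hc₀ := eCross_nonneg G A
  have ha : (0 : ℝ) ≤ #A := by positivity
  rw [cliqueDefect]
  rcases le_total (#A : ℝ) (r + 1) with h | h
  · nlinarith [mul_nonneg ha (sub_nonneg.2 h)]
  · nlinarith [mul_nonneg ha (sub_nonneg.2 h), (r.cast_nonneg : (0 : ℝ) ≤ r)]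

theorem cliqueDefect_eq_zero_iff (hG : G.IsRegularOfDegree r) (hr : 0 < r) (hA : A.Nonempty) :
    cliqueDefect G r A = 0 ↔ #A = r + 1 ∧ eCross G A = 0 := by
  refine ⟨fun h => ?_, fun ⟨hcard, hc⟩ => by simp [cliqueDefect, hcard, hc]⟩
  have : Nonempty V := hA.to_subtype.map (↑)
  have hn : (r : ℝ) + 1 ≤ Fintype.card V := by exact_mod_cast hG.succ_le_card
  have hr' : (1 : ℝ) ≤ r := by exact_mod_cast hr
  have ha : (1 : ℝ) ≤ #A := by exact_mod_cast hA.card_pos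
  have hc := card_mul_sub_le_eCross hG A
  have hc₀ := eCross_nonneg G A
  rw [cliqueDefect] at h
  have hcard : (#A : ℝ) = r + 1 := by
    rcases lt_trichotomy (#A : ℝ) (r + 1) with hlt | heq | hgt
    · nlinarith [mul_pos (by linarith : (0 : ℝ) < #A) (sub_pos.2 hlt)]
    · exact heq
    · nlinarith [mul_pos (by linarith : (0 : ℝ) < #A) (sub_pos.2 hgt)]
  refine ⟨by exact_mod_cast hcard, ?_⟩
  rw [hcard, sub_self, mul_zero, sub_zero] at h
  exact (mul_eq_zero.1 h).resolve_left (by positivity)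

theorem modScore_eq_of_isRegularOfDegree [Nonempty V] (hG : G.IsRegularOfDegree r)
    (hr : 0 < r) (P : Finpartition (univ : Finset V)) :
    modScore G P = 1 - (r + 1) / Fintype.card V
      - (∑ A ∈ P.parts, cliqueDefect G r A) / (r * Fintype.card V ^ 2) := by
  have hsum : ∑ A ∈ P.parts, (#A : ℝ) = Fintype.card V := by
    exact_mod_cast P.sum_card_parts
  have heIn : ∀ A, eIn G A = (r * #A - eCross G A) / 2 := fun A => by
    linarith [vol_eq_two_mul_eIn_add_eCross G A, vol_of_isRegularOfDegree hG A]
  have hn : (0 : ℝ) < Fintype.card V := by exact_mod_cast Fintype.card_pos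
  have hr' : (0 : ℝ) < r := by exact_mod_cast hr
  have hIn :
      ∑ A ∈ P.parts, eIn G A = (r * Fintype.card V - ∑ A ∈ P.parts, eCross G A) / 2 := by
    simp only [heIn, ← sum_div, sum_sub_distrib, ← mul_sum, hsum]
  have hvol : ∑ A ∈ P.parts, vol G A ^ 2 = r ^ 2 * ∑ A ∈ P.parts, (#A : ℝ) ^ 2 := by
    simp only [vol_of_isRegularOfDegree hG, mul_pow, ← mul_sum]
  have hdef : ∑ A ∈ P.parts, cliqueDefect G r A = Fintype.card V * ∑ A ∈ P.parts, eCross G A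
      - r * (r + 1) * ∑ A ∈ P.parts, (#A : ℝ) + r * ∑ A ∈ P.parts, (#A : ℝ) ^ 2 := by
    rw [mul_sum, mul_sum, mul_sum, ← sum_sub_distrib, ← sum_add_distrib]
    exact sum_congr rfl fun A _ => by rw [cliqueDefect]; ring
  rw [modScore, hIn, hvol, hdef, hsum, numEdges_of_isRegularOfDegree hG]
  field_simp
  ring

theorem modScore_le_of_isRegularOfDegree [Nonempty V] (hG : G.IsRegularOfDegree r)
    (hr : 0 < r) (P : Finpartition (univ : Finset V)) :
    modScore G P ≤ 1 - (r + 1) / Fintype.card V := by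
  have : 0 ≤ (∑ A ∈ P.parts, cliqueDefect G r A) / (r * Fintype.card V ^ 2) :=
    div_nonneg (sum_nonneg fun A _ => cliqueDefect_nonneg hG A) (by positivity)
  rw [modScore_eq_of_isRegularOfDegree hG hr]
  linarith

theorem modScore_eq_iff_of_isRegularOfDegree [Nonempty V] (hG : G.IsRegularOfDegree r)
    (hr : 0 < r) (P : Finpartition (univ : Finset V)) :
    modScore G P = 1 - (r + 1) / Fintype.card V ↔
      ∀ A ∈ P.parts, #A = r + 1 ∧ eCross G A = 0 := by
  have hden : (r : ℝ) * Fintype.card V ^ 2 ≠ 0 := by positivity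
  rw [modScore_eq_of_isRegularOfDegree hG hr, sub_eq_self, div_eq_zero_iff, or_iff_left hden,
    sum_eq_zero_iff_of_nonneg fun A _ => cliqueDefect_nonneg hG A]
  exact forall₂_congr fun A hA => cliqueDefect_eq_zero_iff hG hr (P.nonempty_of_mem_parts hA)

end Graph

theorem modularity_eq_sSup_range (G : SimpleGraph V) :
    modularity G = sSup (Set.range (modScore G)) := by
  rw [modularity]
  congr
  ext
  simp [eq_comm]

theorem modScore_le_modularity (G : SimpleGraph V) (P : Finpartition (univ : Finset V)) :
    modScore G P ≤ modularity G :=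
  modularity_eq_sSup_range G ▸ le_csSup (Set.finite_range _).bddAbove ⟨P, rfl⟩

theorem exists_modScore_eq_modularity (G : SimpleGraph V) :
    ∃ P : Finpartition (univ : Finset V), modScore G P = modularity G :=
  modularity_eq_sSup_range G ▸ (Set.range_nonempty _).csSup_mem (Set.finite_range _)

namespace Finpartition

variable (P : Finpartition (univ : Finset V))

def samePartGraph : SimpleGraph V where
  Adj u v := u ≠ v ∧ P.part u = P.part v
  symm := ⟨fun _ _ h => ⟨h.1.symm, h.2.symm⟩⟩
  loopless := ⟨fun _ h => h.1 rfl⟩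

theorem neighborFinset_samePartGraph (v : V) :
    P.samePartGraph.neighborFinset v = (P.part v).erase v := by
  ext w
  rw [SimpleGraph.mem_neighborFinset, mem_erase,
    P.mem_part_iff_part_eq_part (mem_univ w) (mem_univ v)]
  exact and_congr ne_comm eq_comm

theorem isRegularOfDegree_samePartGraph {r : ℕ} (h : ∀ t ∈ P.parts, #t = r + 1) :
    P.samePartGraph.IsRegularOfDegree r := fun v => by
  rw [← SimpleGraph.card_neighborFinset_eq_degree, neighborFinset_samePartGraph,
    card_erase_of_mem (P.mem_part (mem_univ v)), h _ (P.part_mem.2 (mem_univ v))]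
  rfl

theorem eCross_samePartGraph {t : Finset V} (ht : t ∈ P.parts) :
    eCross P.samePartGraph t = 0 :=
  eCross_eq_zero_iff.2 fun _ hu _ ⟨_, huv⟩ =>
    (P.part_eq_iff_mem ht).1 (huv.symm.trans (P.part_eq_of_mem ht hu))

end Finpartition

/-- every `r`-regular graph on `n ≥ r+1` vertices has modularity at most
`1-(r+1)/n`; this bound is attained by some `r`-regular graph iff `(r+1) ∣ n`; and any
extremal graph is a disjoint union of copies of `K_{r+1}` (every component is complete
with `r+1` vertices, i.e. reachability implies equality or adjacency). -/
theorem modularity_regular_max (r : ℕ) (hr : 1 ≤ r)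
    (hn : r + 1 ≤ Fintype.card V) :
    (∀ G : SimpleGraph V, G.IsRegularOfDegree r →
        modularity G ≤ 1 - ((r : ℝ) + 1) / (Fintype.card V))
    ∧ ((∃ G : SimpleGraph V, G.IsRegularOfDegree r ∧
          modularity G = 1 - ((r : ℝ) + 1) / (Fintype.card V))
        ↔ (r + 1) ∣ Fintype.card V)
    ∧ (∀ G : SimpleGraph V, G.IsRegularOfDegree r →
        modularity G = 1 - ((r : ℝ) + 1) / (Fintype.card V) →
        ∀ u v : V, G.Reachable u v → u = v ∨ G.Adj u v) := by
  have : Nonempty V := Fintype.card_pos_iff.1 (by omega)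
  have modularity_le (G : SimpleGraph V) (hG : G.IsRegularOfDegree r) :
      modularity G ≤ 1 - ((r : ℝ) + 1) / Fintype.card V := by
    obtain ⟨P, hP⟩ := exists_modScore_eq_modularity G
    exact hP ▸ modScore_le_of_isRegularOfDegree hG hr P
  have extremal_partition (G : SimpleGraph V) (hG : G.IsRegularOfDegree r)
      (hmod : modularity G = 1 - ((r : ℝ) + 1) / Fintype.card V) :
      ∃ P : Finpartition (univ : Finset V), ∀ A ∈ P.parts, #A = r + 1 ∧ eCross G A = 0 := by
    obtain ⟨P, hP⟩ := exists_modScore_eq_modularity G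
    exact ⟨P, (modScore_eq_iff_of_isRegularOfDegree hG hr P).1 (hP.trans hmod)⟩
  refine ⟨modularity_le, ⟨?_, ?_⟩, ?_⟩
  · rintro ⟨G, hG, hmod⟩
    obtain ⟨P, hP⟩ := extremal_partition G hG hmod
    rw [← card_univ]
    exact Finpartition.exists_forall_card_eq_iff_dvd.1 ⟨P, fun A hA => (hP A hA).1⟩
  · intro hdvd
    rw [← card_univ] at hdvd
    obtain ⟨P, hP⟩ := Finpartition.exists_forall_card_eq_iff_dvd.2 hdvd
    have hG := P.isRegularOfDegree_samePartGraph hP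
    have hscore := (modScore_eq_iff_of_isRegularOfDegree hG hr P).2
      fun A hA => ⟨hP A hA, P.eCross_samePartGraph hA⟩
    exact ⟨_, hG, le_antisymm (modularity_le _ hG) (hscore ▸ modScore_le_modularity _ P)⟩
  · intro G hG hmod u v huv
    obtain ⟨P, hP⟩ := extremal_partition G hG hmod
    obtain ⟨hcard, hc⟩ := hP _ (P.part_mem.2 (mem_univ u))
    have hu := P.mem_part (mem_univ u)
    exact or_iff_not_imp_left.2 <| isClique_of_eCross_eq_zero hG hcard hc hu
      (mem_of_reachable_of_eCross_eq_zero hc hu huv)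
end

section
/- Let G be an r-regular graph on n vertices such that for some λ ≥ 0 and for every nonempty S ⊆ V(G), |e(S) − r|S|²/(2n)| ≤ (λ/2)|S|. Then q*(G) ≤ λ/r. -/
open Finset
open scoped Classical

variable {V : Type*} [Fintype V] [DecidableEq V]

lemma degR_eq (G : SimpleGraph V) (r : ℕ)
    (hreg : G.IsRegularOfDegree r) (v : V) : degR G v = r := by
  have h : (univ.filter (G.Adj v)) = G.neighborFinset v := by
    ext u; simp
  have : degR G v = ((univ.filter (G.Adj v)).card : ℝ) := by
    simp [degR, Finset.sum_boole]
  rw [this, h]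
  exact_mod_cast hreg v

/-- if an `r`-regular graph satisfies the expander-mixing inequality
`|e(S) - r|S|²/(2n)| ≤ (λ/2)|S|` for all nonempty `S`, then `q*(G) ≤ λ/r`. -/
theorem modularity_le_lambda_div_r (G : SimpleGraph V) (r : ℕ) (hr : 1 ≤ r)
    (hreg : G.IsRegularOfDegree r) (hn : 0 < Fintype.card V)
    (lam : ℝ) (hlam : 0 ≤ lam)
    (hmix : ∀ S : Finset V, S.Nonempty →
      |eIn G S - r * (S.card : ℝ)^2 / (2 * Fintype.card V)| ≤ lam / 2 * S.card) :
    modularity G ≤ lam / r := by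
  set N := (Fintype.card V : ℝ) with hNdef
  have hN : 0 < N := by rw [hNdef]; exact_mod_cast hn
  have hR : (0:ℝ) < r := by exact_mod_cast hr
  have hm : numEdges G = N * r / 2 := by
    have : ∀ u : V, (∑ v : V, if G.Adj u v then (1:ℝ) else 0) = r := fun u =>
      degR_eq G r hreg u
    simp only [numEdges, eIn]
    rw [Finset.sum_congr rfl fun u _ => this u]
    simp [hNdef]
    ring
  have hmpos : 0 < numEdges G := by rw [hm]; positivity
  apply Real.sSup_le
  · rintro q ⟨P, rfl⟩
    have hvol : ∀ A ∈ P.parts, vol G A = r * A.card := by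
      intro A hA
      simp only [vol]
      rw [Finset.sum_congr rfl fun v _ => degR_eq G r hreg v]
      simp [mul_comm]
    have hsum : ∑ A ∈ P.parts, (A.card : ℝ) = N := by
      rw [hNdef, ← Finset.card_univ, ← P.sum_card_parts]
      push_cast; rfl
    set T := ∑ A ∈ P.parts, ((A.card : ℝ))^2 with hT
    have h2 : ∑ A ∈ P.parts, (vol G A)^2 = (r:ℝ)^2 * T := by
      rw [hT, Finset.mul_sum]
      refine Finset.sum_congr rfl fun A hA => ?_
      rw [hvol A hA]; ring
    have h1 : ∑ A ∈ P.parts, eIn G A ≤ (r:ℝ)/(2*N) * T + lam/2 * N := by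
      have : ∀ A ∈ P.parts, eIn G A ≤ (r:ℝ) * (A.card:ℝ)^2/(2*N) + lam/2 * A.card := by
        intro A hA
        have hne : A.Nonempty := P.nonempty_of_mem_parts hA
        have := hmix A hne
        have habs := (abs_le.mp this).2
        linarith
      calc ∑ A ∈ P.parts, eIn G A
          ≤ ∑ A ∈ P.parts, ((r:ℝ) * (A.card:ℝ)^2/(2*N) + lam/2 * A.card) :=
            Finset.sum_le_sum this
        _ = (r:ℝ)/(2*N) * T + lam/2 * N := by
            rw [Finset.sum_add_distrib, ← hsum, hT, Finset.mul_sum, Finset.mul_sum]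
            congr 1
            · exact Finset.sum_congr rfl fun A _ => by ring
            · rw [← Finset.mul_sum]
    rw [modScore, h2, hm]
    have key : ((r:ℝ)/(2*N) * T + lam/2 * N) / (N * r / 2) - (r:ℝ)^2 * T / (4 * (N * r / 2)^2)
        = lam / r := by
      field_simp
      ring
    rw [← key]
    gcongr
  · positivity
end
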